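/- Let r : ℝ → ℝ³ be continuous and let q⃗ : ℝ → ℝ³ be differentiable with |q⃗(t)| < 1 for all t, satisfying the ODE q⃗'(t) = (1/2)(√(1 − |q⃗(t)|²)·r(t) + q⃗(t) × r(t)). Define Q(t) := R(q⃗(t)), where for q⃗ = (q₁, q₂, q₃) with q₀ := √(1 − |q⃗|²), R(q⃗) is the matrix with rows (q₀² + q₁² − q₂² − q₃², 2(q₁q₂ − q₀q₃), 2(q₁q₃ + q₀q₂)), (2(q₂q₁ + q₀q₃), q₀² − q₁² + q₂² − q₃², 2(q₂q₃ − q₀q₁)), (2(q₃q₁ − q₀q₂), 2(q₃q₂ + q₀q₁), q₀² − q₁² − q₂² + q₃²). Then Q is differentiable and Q'(t) = Q(t)·S(r(t)) for all t, where S(y) is the skew-symmetric matrix with S(y)x = y × x. -/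

import Mathlib

/-! With `q₀ = √(1 - |q|²)`, `R(q)` is the matrix of the rotation `x ↦ w x w̄` of pure quaternions
`x ≅ ℝ³` by the unit quaternion `w = q₀ + q`. The ODE says exactly that `w' = w ρ` with
`ρ = r/2` pure, so `(w x w̄)' = w (ρ x - x ρ) w̄ = w (r × x) w̄`, i.e. `Q' x = Q (r × x) = Q S(r) x`. -/

/-- The rotation matrix associated with a quaternion parameter `p` with `|p| ≤ 1`
(`p₀ := √(1 − |p|²)`). -/
noncomputable def quatRot (p : Fin 3 → ℝ) : Matrix (Fin 3) (Fin 3) ℝ :=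
  let p0 := Real.sqrt (1 - dotProduct p p)
  !![p0 ^ 2 + p 0 ^ 2 - p 1 ^ 2 - p 2 ^ 2, 2 * (p 0 * p 1 - p0 * p 2),
       2 * (p 0 * p 2 + p0 * p 1);
     2 * (p 1 * p 0 + p0 * p 2), p0 ^ 2 - p 0 ^ 2 + p 1 ^ 2 - p 2 ^ 2,
       2 * (p 1 * p 2 - p0 * p 0);
     2 * (p 2 * p 0 - p0 * p 1), 2 * (p 2 * p 1 + p0 * p 0),
       p0 ^ 2 - p 0 ^ 2 - p 1 ^ 2 + p 2 ^ 2]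

/-- The skew-symmetric matrix `S(y)` with `S(y)x = y × x`. -/
def skew3 (y : Fin 3 → ℝ) : Matrix (Fin 3) (Fin 3) ℝ :=
  !![0, -y 2, y 1;
     y 2, 0, -y 0;
     -y 1, y 0, 0]

open Quaternion Matrix

theorem HasDerivAt.mul_mul_star {𝕜 A : Type*} [NontriviallyNormedField 𝕜] [StarRing 𝕜]
    [TrivialStar 𝕜] [NormedRing A] [NormedAlgebra 𝕜 A] [StarRing A] [StarModule 𝕜 A]
    [ContinuousStar A] {w : 𝕜 → A} {ρ : A} {t : 𝕜} (hw : HasDerivAt w (w t * ρ) t)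
    (hρ : star ρ = -ρ) (x : A) :
    HasDerivAt (fun u => w u * x * star (w u)) (w t * (ρ * x - x * ρ) * star (w t)) t := by
  refine ((hw.mul_const x).mul hw.star).congr_deriv ?_
  simp only [star_mul, hρ, mul_sub, sub_mul, mul_neg, neg_mul, mul_assoc]
  abel

theorem HasDerivAt.dotProduct {𝕜 ι : Type*} [NontriviallyNormedField 𝕜] [Fintype ι]
    {f g : 𝕜 → ι → 𝕜} {f' g' : ι → 𝕜} {t : 𝕜} (hf : HasDerivAt f f' t)
    (hg : HasDerivAt g g' t) :
    HasDerivAt (fun u => f u ⬝ᵥ g u) (f' ⬝ᵥ g t + f t ⬝ᵥ g') t := by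
  simp only [_root_.dotProduct, ← Finset.sum_add_distrib]
  exact HasDerivAt.fun_sum fun i _ => (hasDerivAt_pi.mp hf i).mul (hasDerivAt_pi.mp hg i)

theorem HasDerivAt.sqrt_one_sub_dotProduct_self {ι : Type*} [Fintype ι] {f : ℝ → ι → ℝ}
    {f' : ι → ℝ} {t : ℝ} (hf : HasDerivAt f f' t) (hft : f t ⬝ᵥ f t < 1) :
    HasDerivAt (fun u => √(1 - f u ⬝ᵥ f u)) (-(f t ⬝ᵥ f') / √(1 - f t ⬝ᵥ f t)) t := by
  refine (((hf.dotProduct hf).const_sub 1).sqrt (by linarith)).congr_deriv ?_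
  rw [dotProduct_comm f']
  ring

instance : StarModule ℝ ℍ[ℝ] where
  star_smul c a := by ext <;> simp

noncomputable def pureQuat : (Fin 3 → ℝ) →L[ℝ] ℍ[ℝ] := LinearMap.toContinuousLinearMap
  { toFun v := ⟨0, v 0, v 1, v 2⟩
    map_add' _ _ := QuaternionAlgebra.ext (add_zero 0).symm rfl rfl rfl
    map_smul' c _ := QuaternionAlgebra.ext (mul_zero c).symm rfl rfl rfl }

noncomputable def imVec : ℍ[ℝ] →L[ℝ] (Fin 3 → ℝ) := LinearMap.toContinuousLinearMap
  { toFun x := ![x.imI, x.imJ, x.imK]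
    map_add' _ _ := by ext i; fin_cases i <;> rfl
    map_smul' _ _ := by ext i; fin_cases i <;> rfl }

@[simp] lemma pureQuat_re (v : Fin 3 → ℝ) : (pureQuat v).re = 0 := rfl
@[simp] lemma pureQuat_imI (v : Fin 3 → ℝ) : (pureQuat v).imI = v 0 := rfl
@[simp] lemma pureQuat_imJ (v : Fin 3 → ℝ) : (pureQuat v).imJ = v 1 := rfl
@[simp] lemma pureQuat_imK (v : Fin 3 → ℝ) : (pureQuat v).imK = v 2 := rfl
@[simp] lemma imVec_apply (x : ℍ[ℝ]) : imVec x = ![x.imI, x.imJ, x.imK] := rfl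

lemma star_pureQuat (v : Fin 3 → ℝ) : star (pureQuat v) = -pureQuat v := by
  ext <;> simp

lemma pureQuat_mul_sub_mul (a b : Fin 3 → ℝ) :
    pureQuat a * pureQuat b - pureQuat b * pureQuat a = pureQuat ((2 : ℝ) • a ⨯₃ b) := by
  ext <;> simp [cross_apply] <;> ring

noncomputable def unitQuat (p : Fin 3 → ℝ) : ℍ[ℝ] := (√(1 - p ⬝ᵥ p) : ℍ[ℝ]) + pureQuat p

lemma quatRot_mulVec (p v : Fin 3 → ℝ) :
    quatRot p *ᵥ v = imVec (unitQuat p * pureQuat v * star (unitQuat p)) := by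
  ext i
  fin_cases i <;> simp [quatRot, unitQuat, mulVec, dotProduct, Fin.sum_univ_three] <;> ring

lemma skew3_mulVec (y v : Fin 3 → ℝ) : skew3 y *ᵥ v = y ⨯₃ v := by
  ext i
  fin_cases i <;> simp [skew3, mulVec, dotProduct, Fin.sum_univ_three, cross_apply] <;> ring

theorem hasDerivAt_unitQuat_comp {q : ℝ → Fin 3 → ℝ} {r : Fin 3 → ℝ} {t : ℝ}
    (hqt : q t ⬝ᵥ q t < 1)
    (hq : HasDerivAt q ((1 / 2 : ℝ) • (√(1 - q t ⬝ᵥ q t) • r + q t ⨯₃ r)) t) :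
    HasDerivAt (fun u => unitQuat (q u)) (unitQuat (q t) * pureQuat ((2⁻¹ : ℝ) • r)) t := by
  have hs_pos : 0 < √(1 - q t ⬝ᵥ q t) := Real.sqrt_pos.mpr (by linarith)
  have hs : HasDerivAt (fun u => √(1 - q u ⬝ᵥ q u)) (-(2⁻¹ * q t ⬝ᵥ r)) t := by
    refine (hq.sqrt_one_sub_dotProduct_self hqt).congr_deriv ?_
    rw [dotProduct_smul, dotProduct_add, dotProduct_smul, dot_self_cross]
    field_simp
    simp
  have hfun : (fun u => unitQuat (q u)) =
      fun u => √(1 - q u ⬝ᵥ q u) • (1 : ℍ[ℝ]) + pureQuat (q u) := by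
    funext u
    apply Quaternion.ext <;> simp [unitQuat]
  rw [hfun]
  refine ((hs.smul_const (1 : ℍ[ℝ])).add
    (pureQuat.hasFDerivAt.comp_hasDerivAt t hq)).congr_deriv ?_
  apply Quaternion.ext <;>
    simp [unitQuat, cross_apply, dotProduct, Fin.sum_univ_three, vecHead, vecTail] <;> ring

theorem hasDerivAt_quatRot_mulVec {q : ℝ → Fin 3 → ℝ} {r : Fin 3 → ℝ} {t : ℝ}
    (hw : HasDerivAt (fun u => unitQuat (q u)) (unitQuat (q t) * pureQuat ((2⁻¹ : ℝ) • r)) t)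
    (v : Fin 3 → ℝ) :
    HasDerivAt (fun u => quatRot (q u) *ᵥ v) (quatRot (q t) *ᵥ (r ⨯₃ v)) t := by
  have h := imVec.hasFDerivAt.comp_hasDerivAt t (hw.mul_mul_star (star_pureQuat _) (pureQuat v))
  rw [pureQuat_mul_sub_mul, LinearMap.map_smul₂, smul_smul, mul_inv_cancel₀ two_ne_zero,
    one_smul] at h
  simpa only [quatRot_mulVec, Function.comp_def] using h

theorem quaternion_ode_to_rotation_ode_general
    (r : ℝ → Fin 3 → ℝ)
    (q : ℝ → Fin 3 → ℝ)
    (hqnorm : ∀ t, dotProduct (q t) (q t) < 1)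
    (hqode : ∀ t, HasDerivAt q
      ((1 / 2 : ℝ) • (Real.sqrt (1 - dotProduct (q t) (q t)) • r t
        + crossProduct (q t) (r t))) t) :
    ∀ t, ∀ i j, HasDerivAt (fun u => quatRot (q u) i j)
      ((quatRot (q t) * skew3 (r t)) i j) t := by
  intro t i j
  have h := hasDerivAt_pi.mp
    (hasDerivAt_quatRot_mulVec (hasDerivAt_unitQuat_comp (hqnorm t) (hqode t)) (Pi.single j 1)) i
  rw [← skew3_mulVec, mulVec_mulVec] at h
  simpa only [mulVec_single_one, col_apply] using h

/-- **The quaternion ODE yields the attitude ODE `Q' = Q·S(r)`.** -/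
theorem quaternion_ode_to_rotation_ode
    (r : ℝ → Fin 3 → ℝ) (hr : Continuous r)
    (q : ℝ → Fin 3 → ℝ)
    (hqnorm : ∀ t, dotProduct (q t) (q t) < 1)
    (hqode : ∀ t, HasDerivAt q
      ((1 / 2 : ℝ) • (Real.sqrt (1 - dotProduct (q t) (q t)) • r t
        + crossProduct (q t) (r t))) t) :
    ∀ t, ∀ i j, HasDerivAt (fun u => quatRot (q u) i j)
      ((quatRot (q t) * skew3 (r t)) i j) t :=
  quaternion_ode_to_rotation_ode_general r q hqnorm hqode
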